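/- For every f ∈ L¹(ℝ), N ∈ ℕ with N ≥ 1, and all x, ξ ∈ ℝ (a.e. x), the Zak transform of the translate T_{1/N}f (where T_h f(y) = f(y−h)) satisfies Z_1(T_{1/N}f)(x, ξ) = ∑_{q=0}^{N-1} e^{-2πi(ξ+q)/N} Z_N(f)(x, ξ + q). -/

import Mathlib

/-!
Since `ℤ ⊆ (1/N)ℤ`, summing `Z_N g (x, ξ + q)` over `q < N` filters the frequencies `k/N` through
`∑_q e^{-2πikq/N}`, which is `N` if `N ∣ k` and `0` otherwise; what survives is exactly the series
`Z_1 g (x, ξ)`. For `g = T_{1/N} f`, reindexing `k ↦ k + 1` gives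
`Z_N g (x, ξ) = e^{-2πiξ/N} Z_N f (x, ξ)`. The interchange of sums is legitimate for a.e. `x`:
`∑_k |f (x + k/N)|` is `1/N`-periodic in `x` with integral `‖f‖₁` over a period, hence finite a.e.
-/

open MeasureTheory Complex

/-- The Zak transform of `f` for the group `(1/N)ℤ`. -/
noncomputable def Zak (N : ℕ) (f : ℝ → ℂ) (x ξ : ℝ) : ℂ :=
  (N : ℂ)⁻¹ * ∑' k : ℤ,
    f (x + (k : ℝ) / N) * Complex.exp (-(2 * Real.pi * Complex.I * ((k : ℂ) / N) * ξ))

open Finset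
open scoped Real ENNReal

namespace MeasureTheory

variable {G α : Type*} [Group G] [Countable G] [MeasurableSpace α] [MulAction G α]
  [MeasurableConstSMul G α] {μ : Measure α} [SMulInvariantMeasure G α μ] {s : Set α}

@[to_additive]
theorem IsFundamentalDomain.ae_of_ae_restrict_of_smul_iff (hs : IsFundamentalDomain G s μ)
    {p : α → Prop} (hp : ∀ (g : G) x, p (g • x) ↔ p x) (h : ∀ᵐ x ∂μ.restrict s, p x) :
    ∀ᵐ x ∂μ, p x := by
  refine hs.measure_zero_of_invariant _ (fun g => ?_) ?_
  · ext x
    simp [Set.mem_smul_set_iff_inv_smul_mem, hp]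
  · rwa [← Measure.restrict_apply₀' hs.nullMeasurableSet]

@[to_additive]
theorem IsFundamentalDomain.ae_summable_norm_smul {E : Type*} [NormedAddCommGroup E]
    (hs : IsFundamentalDomain G s μ) {f : α → E} (hf : Integrable f μ) :
    ∀ᵐ x ∂μ, Summable fun g : G => ‖f (g • x)‖ := by
  set F : α → ℝ≥0∞ := fun x => ∑' g : G, ‖f (g • x)‖ₑ
  have hF_smul (g : G) (x : α) : F (g • x) = F x := by
    simp only [F, smul_smul]
    exact (Equiv.mulRight g).tsum_eq fun h => ‖f (h • x)‖ₑ
  have h_meas (g : G) : AEMeasurable (fun x => ‖f (g • x)‖ₑ) (μ.restrict s) :=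
    (hf.1.enorm.comp_quasiMeasurePreserving
      (measurePreserving_smul g μ).quasiMeasurePreserving).restrict
  have hF_lintegral : ∫⁻ x in s, F x ∂μ = ∫⁻ x, ‖f x‖ₑ ∂μ := by
    rw [lintegral_tsum h_meas, hs.lintegral_eq_tsum'']
  have hF_fin : ∀ᵐ x ∂μ, F x < ∞ :=
    hs.ae_of_ae_restrict_of_smul_iff (fun g x => by rw [hF_smul])
      (ae_lt_top' (AEMeasurable.tsum h_meas) (hF_lintegral ▸ hf.2.ne))
  filter_upwards [hF_fin] with x hx
  exact tsum_enorm_ne_top_iff_summable_norm.1 hx.ne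

theorem Integrable.ae_summable_norm_comp_add_int_mul {E : Type*} [NormedAddCommGroup E]
    {f : ℝ → E} (hf : Integrable f) {T : ℝ} (hT : 0 < T) :
    ∀ᵐ x, Summable fun k : ℤ => ‖f (x + k * T)‖ := by
  filter_upwards [(isAddFundamentalDomain_Ioc hT 0).ae_summable_norm_vadd hf] with x hx
  have h_inj : Function.Injective fun k : ℤ =>
      (⟨k • T, AddSubgroup.zsmul_mem_zmultiples T k⟩ : AddSubgroup.zmultiples T) :=
    fun k l hkl => (zsmul_left_strictMono hT).injective (congrArg Subtype.val hkl)
  refine (hx.comp_injective h_inj).congr fun k => ?_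
  simp [AddSubgroup.vadd_def, zsmul_eq_mul, add_comm]

end MeasureTheory

theorem sum_range_pow_eq_ite_of_pow_eq_one {K : Type*} [DivisionRing K] [DecidableEq K]
    {z : K} {N : ℕ} (hz : z ^ N = 1) : ∑ q ∈ range N, z ^ q = if z = 1 then (N : K) else 0 := by
  split_ifs with h
  · simp [h]
  · rw [geom_sum_eq h, hz, sub_self, zero_div]

theorem sum_range_exp_int_div_mul_eq_ite {N : ℕ} (hN : N ≠ 0) (k : ℤ) :
    ∑ q ∈ range N, exp (-(2 * π * I * (k / N) * q)) = if (N : ℤ) ∣ k then (N : ℂ) else 0 := by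
  have hζ := Complex.isPrimitiveRoot_exp N hN
  have h_pow (q : ℕ) : exp (-(2 * π * I * (k / N) * q)) = (exp (2 * π * I / N) ^ (-k)) ^ q := by
    rw [← Complex.exp_int_mul, ← Complex.exp_nat_mul]
    push_cast
    ring_nf
  have h_root : (exp (2 * π * I / N) ^ (-k)) ^ N = 1 := by
    rw [← zpow_natCast, ← zpow_mul, mul_comm (-k), zpow_mul, zpow_natCast, hζ.pow_eq_one, one_zpow]
  simp_rw [h_pow, sum_range_pow_eq_ite_of_pow_eq_one h_root, hζ.zpow_eq_one_iff_dvd, dvd_neg]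

theorem tsum_ite_dvd_eq_tsum_mul {M : Type*} [AddCommMonoid M] [TopologicalSpace M] {n : ℤ}
    (hn : n ≠ 0) (a : ℤ → M) : ∑' k, (if n ∣ k then a k else 0) = ∑' m, a (n * m) := by
  rw [← (mul_right_injective₀ hn).tsum_eq]
  · simp
  · intro k hk
    by_contra h
    exact hk (if_neg fun ⟨m, hm⟩ => h ⟨m, hm.symm⟩)

theorem zak_comp_sub_intCast_div (N : ℕ) (f : ℝ → ℂ) (j : ℤ) (x ξ : ℝ) :
    Zak N (fun y => f (y - j / N)) x ξ = exp (-(2 * π * I * (j / N) * ξ)) * Zak N f x ξ := by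
  rw [Zak, Zak, mul_left_comm, ← tsum_mul_left (a := exp _),
    ← (Equiv.addRight j).tsum_eq (α := ℂ)]
  congr 1
  refine tsum_congr fun k => ?_
  have h_arg : x + ((k + j : ℤ) : ℝ) / N - j / N = x + k / N := by push_cast; ring
  rw [Equiv.coe_addRight, h_arg, mul_left_comm, ← exp_add]
  push_cast
  ring_nf

theorem zak_one_eq_sum_range_zak {N : ℕ} (hN : N ≠ 0) {g : ℝ → ℂ} {x : ℝ}
    (hg : Summable fun k : ℤ => ‖g (x + k / N)‖) (ξ : ℝ) :
    Zak 1 g x ξ = ∑ q ∈ range N, Zak N g x (ξ + q) := by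
  set c : ℤ → ℂ := fun k => g (x + k / N) * exp (-(2 * π * I * (k / N) * ξ))
  have h_summable (q : ℕ) : Summable fun k => c k * exp (-(2 * π * I * (k / N) * q)) := by
    refine hg.of_norm_bounded fun k => ?_
    simp [c, Complex.norm_exp]
  have h_zak (q : ℕ) :
      Zak N g x (ξ + q) = (N : ℂ)⁻¹ * ∑' k, c k * exp (-(2 * π * I * (k / N) * q)) := by
    rw [Zak]
    congr 1
    refine tsum_congr fun k => ?_
    simp only [c]
    rw [mul_assoc (g _), ← exp_add]
    push_cast
    ring_nf
  calc Zak 1 g x ξ = ∑' m, c (N * m) := by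
        rw [Zak]
        simp only [Nat.cast_one, inv_one, one_mul, div_one, c]
        congr 1 with m
        push_cast
        field_simp
    _ = (N : ℂ)⁻¹ * ∑' k, c k * ∑ q ∈ range N, exp (-(2 * π * I * (k / N) * q)) := by
        simp_rw [sum_range_exp_int_div_mul_eq_ite hN, ← tsum_mul_left,
          ← tsum_ite_dvd_eq_tsum_mul (Int.natCast_ne_zero.2 hN)]
        congr 1 with k
        split_ifs
        · field_simp
        · simp
    _ = ∑ q ∈ range N, Zak N g x (ξ + q) := by
        simp_rw [h_zak, mul_sum]
        rw [Summable.tsum_finsetSum fun q _ => h_summable q, mul_sum]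

theorem zak_one_of_translate (f : ℝ → ℂ) (hf : Integrable f)
    (N : ℕ) (hN : 1 ≤ N) :
    ∀ᵐ x ∂(volume : Measure ℝ), ∀ ξ : ℝ,
      Zak 1 (fun y => f (y - 1 / N)) x ξ =
        ∑ q ∈ Finset.range N,
          Complex.exp (-(2 * Real.pi * Complex.I * ((ξ : ℂ) + q) / N)) * Zak N f x (ξ + q) := by
  have hN₀ : N ≠ 0 := by omega
  have h_translate : Integrable fun y => f (y - 1 / N) := hf.comp_sub_right _
  filter_upwards [h_translate.ae_summable_norm_comp_add_int_mul (T := 1 / N) (by positivity)]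
    with x hx ξ
  rw [zak_one_eq_sum_range_zak hN₀ (by simpa only [mul_one_div] using hx)]
  refine sum_congr rfl fun q _ => ?_
  rw [show (1 / N : ℝ) = ((1 : ℤ) : ℝ) / N by norm_num, zak_comp_sub_intCast_div]
  congr 2
  push_cast
  ring
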